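/- Let g ≥ m ≥ 1, let ζ and θ be states on a finite-dimensional system T, and let η be a state on T^{⊗m}, with η_{1:j} its marginal on the first j factors (η_{1:0} := 1) and η_i its marginal on the i-th factor. Define the state ν₂ := (1/g)[ ∑_{i=1}^{g−m} ζ^{⊗(i−1)} ⊗ η ⊗ θ^{⊗(g−m−i+1)} ⊗ |i⟩⟨i| + ∑_{i=g−m+1}^{g} ζ^{⊗(i−1)} ⊗ η_{1:g−i+1} ⊗ |i⟩⟨i| ] on T^{⊗g} ⊗ ℂ^g. Then: (a) the partial trace of ν₂ over the g-th T-factor equals ω := (1/g)[ ∑_{i=1}^{g−m−1} ζ^{⊗(i−1)} ⊗ η ⊗ θ^{⊗(g−m−i)} ⊗ |i⟩⟨i| + ∑_{i=g−m}^{g} ζ^{⊗(i−1)} ⊗ η_{1:g−i} ⊗ |i⟩⟨i| ]; (b) the partial trace of ν₂ over the first g−1 T-factors and the classical register equals (m/g)·ν'' + (1−m/g)·θ, where ν'' := (1/m) ∑_{i=1}^{m} η_i; (c) if moreover each η_i is supported on a subspace V of T and θ is supported on a subspace W of T orthogonal to V, then measuring the projector P_V on the state in (b) succeeds with probability m/g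 and the post-measurement state is ν''. -/

import Mathlib

open scoped BigOperators
open Matrix
open ComplexOrder

noncomputable section

namespace PaperQI

/-- The trace norm `tr √(MᴴM)` of a complex square matrix (sum of singular values). -/
noncomputable def traceNorm {ι : Type} [Fintype ι] [DecidableEq ι] (M : Matrix ι ι ℂ) : ℝ :=
  (((Matrix.posSemidef_conjTranspose_mul_self M).1.eigenvectorUnitary : Matrix ι ι ℂ) *
    diagonal (((↑) : ℝ → ℂ) ∘ (√·) ∘ (Matrix.posSemidef_conjTranspose_mul_self M).1.eigenvalues) *
    (star (Matrix.posSemidef_conjTranspose_mul_self M).1.eigenvectorUnitary : Matrix ι ι ℂ)).trace.re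

/-- The trace distance `Δ(ρ,σ) = ½‖ρ − σ‖₁`. -/
noncomputable def traceDist {ι : Type} [Fintype ι] [DecidableEq ι] (ρ σ : Matrix ι ι ℂ) : ℝ :=
  traceNorm (ρ - σ) / 2

/-- A quantum state: a positive semidefinite matrix of unit trace. -/
def IsState {ι : Type} [Fintype ι] (M : Matrix ι ι ℂ) : Prop :=
  M.PosSemidef ∧ M.trace = 1

/-- Kronecker/tensor product of two matrices, on the product index type. -/
def kron {ι κ : Type} (M : Matrix ι ι ℂ) (N : Matrix κ κ ℂ) :
    Matrix (ι × κ) (ι × κ) ℂ := fun p q => M p.1 q.1 * N p.2 q.2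

/-- The `n`-fold tensor power `ρ^{⊗n}`. -/
def tensorPow {ι : Type} (ρ : Matrix ι ι ℂ) (n : ℕ) :
    Matrix (Fin n → ι) (Fin n → ι) ℂ := fun x y => ∏ i, ρ (x i) (y i)

/-- Partial trace over the second tensor factor. -/
noncomputable def ptraceRight {ι κ : Type} [Fintype κ] (M : Matrix (ι × κ) (ι × κ) ℂ) :
    Matrix ι ι ℂ := fun a b => ∑ c, M (a, c) (b, c)

/-- Partial trace over the first tensor factor. -/
noncomputable def ptraceLeft {ι κ : Type} [Fintype ι] (M : Matrix (ι × κ) (ι × κ) ℂ) :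
    Matrix κ κ ℂ := fun a b => ∑ c, M (c, a) (c, b)

/-- Marginal of a multipartite state on `S^{⊗m}` on the `i`-th tensor factor. -/
noncomputable def marginal {ι : Type} [Fintype ι] [DecidableEq ι] {m : ℕ}
    (η : Matrix (Fin m → ι) (Fin m → ι) ℂ) (i : Fin m) : Matrix ι ι ℂ :=
  fun a b => ∑ x : Fin m → ι, if x i = a then η x (Function.update x i b) else 0

/-- The extension `id_τ ⊗ Φ` of a map on matrices, acting blockwise. -/
def rightExt {ι κ τ : Type} (Φ : Matrix ι ι ℂ → Matrix κ κ ℂ) :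
    Matrix (τ × ι) (τ × ι) ℂ → Matrix (τ × κ) (τ × κ) ℂ :=
  fun M p q => Φ (fun x y => M (p.1, x) (q.1, y)) p.2 q.2

/-- The extension `Φ ⊗ id_τ`. -/
def leftExt {ι κ τ : Type} (Φ : Matrix ι ι ℂ → Matrix κ κ ℂ) :
    Matrix (ι × τ) (ι × τ) ℂ → Matrix (κ × τ) (κ × τ) ℂ :=
  fun M p q => Φ (fun x y => M (x, p.2) (y, q.2)) p.1 q.1

/-- Complete positivity: every finite-dimensional extension `id ⊗ Φ` preserves
positive semidefiniteness. -/
def IsCP {ι κ : Type} [Fintype ι] [Fintype κ] (Φ : Matrix ι ι ℂ → Matrix κ κ ℂ) : Prop :=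
  ∀ (n : ℕ) (M : Matrix (Fin n × ι) (Fin n × ι) ℂ), M.PosSemidef →
    (rightExt Φ M).PosSemidef

/-- Trace preserving. -/
def IsTP {ι κ : Type} [Fintype ι] [Fintype κ] (Φ : Matrix ι ι ℂ → Matrix κ κ ℂ) : Prop :=
  ∀ M, (Φ M).trace = M.trace

/-- Trace nonincreasing on positive semidefinite inputs. -/
def IsTNI {ι κ : Type} [Fintype ι] [Fintype κ] (Φ : Matrix ι ι ℂ → Matrix κ κ ℂ) : Prop :=
  ∀ M : Matrix ι ι ℂ, M.PosSemidef → ((Φ M).trace).re ≤ (M.trace).re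

/-- A quantum channel: linear, completely positive and trace preserving. -/
def IsChannel {ι κ : Type} [Fintype ι] [Fintype κ] (Φ : Matrix ι ι ℂ → Matrix κ κ ℂ) : Prop :=
  IsLinearMap ℂ Φ ∧ IsCP Φ ∧ IsTP Φ


/-- Marginal of a state on `T^{⊗m}` on its first `j` tensor factors. -/
noncomputable def margFirst {T : Type} [Fintype T] [DecidableEq T] {m : ℕ}
    (η : Matrix (Fin m → T) (Fin m → T) ℂ) (j : ℕ) (hj : j ≤ m) :
    Matrix (Fin j → T) (Fin j → T) ℂ :=
  fun a b => ∑ x : Fin m → T,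
    if (fun t : Fin j => x (Fin.castLE hj t)) = a
    then η x (fun s : Fin m => if h : (s : ℕ) < j then b ⟨s, h⟩ else x s) else 0

/-- The state
`ν₂ = (1/g)[ ∑_{i=1}^{g−m} ζ^{⊗(i−1)} ⊗ η ⊗ θ^{⊗(g−m−i+1)} ⊗ |i⟩⟨i|
            + ∑_{i=g−m+1}^{g} ζ^{⊗(i−1)} ⊗ η_{1:g−i+1} ⊗ |i⟩⟨i| ]` on `T^{⊗g} ⊗ ℂ^g`. -/
noncomputable def nu2g {T : Type} [Fintype T] [DecidableEq T] (g : ℕ) {m : ℕ}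
    (ζ θ : Matrix T T ℂ) (η : Matrix (Fin m → T) (Fin m → T) ℂ) :
    Matrix ((Fin g → T) × Fin g) ((Fin g → T) × Fin g) ℂ :=
  fun p q =>
    if p.2 = q.2 then
      (1 / (g : ℂ)) *
        (∏ t : Fin g, if (t : ℕ) < (p.2 : ℕ) then ζ (p.1 t) (q.1 t) else 1) *
        (if h : (p.2 : ℕ) < g - m then
          η (fun t : Fin m => p.1 ⟨(p.2 : ℕ) + (t : ℕ), by have := t.isLt; omega⟩)
            (fun t : Fin m => q.1 ⟨(p.2 : ℕ) + (t : ℕ), by have := t.isLt; omega⟩) *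
            ∏ t : Fin g, if (p.2 : ℕ) + m ≤ (t : ℕ) then θ (p.1 t) (q.1 t) else 1
        else
          margFirst η (g - (p.2 : ℕ)) (by have := p.2.isLt; omega)
            (fun t => p.1 ⟨(p.2 : ℕ) + (t : ℕ), by have := t.isLt; have := p.2.isLt; omega⟩)
            (fun t => q.1 ⟨(p.2 : ℕ) + (t : ℕ), by have := t.isLt; have := p.2.isLt; omega⟩))
    else 0

/-- The catalyst
`ω = (1/g)[ ∑_{i=1}^{g−m−1} ζ^{⊗(i−1)} ⊗ η ⊗ θ^{⊗(g−m−i)} ⊗ |i⟩⟨i|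
           + ∑_{i=g−m}^{g} ζ^{⊗(i−1)} ⊗ η_{1:g−i} ⊗ |i⟩⟨i| ]` on `T^{⊗(g−1)} ⊗ ℂ^g`. -/
noncomputable def omegag {T : Type} [Fintype T] [DecidableEq T] (g : ℕ) {m : ℕ}
    (ζ θ : Matrix T T ℂ) (η : Matrix (Fin m → T) (Fin m → T) ℂ) :
    Matrix ((Fin (g - 1) → T) × Fin g) ((Fin (g - 1) → T) × Fin g) ℂ :=
  fun p q =>
    if p.2 = q.2 then
      (1 / (g : ℂ)) *
        (∏ t : Fin (g - 1), if (t : ℕ) < (p.2 : ℕ) then ζ (p.1 t) (q.1 t) else 1) *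
        (if h : (p.2 : ℕ) < g - m - 1 then
          η (fun t : Fin m => p.1 ⟨(p.2 : ℕ) + (t : ℕ), by have := t.isLt; omega⟩)
            (fun t : Fin m => q.1 ⟨(p.2 : ℕ) + (t : ℕ), by have := t.isLt; omega⟩) *
            ∏ t : Fin (g - 1), if (p.2 : ℕ) + m ≤ (t : ℕ) then θ (p.1 t) (q.1 t) else 1
        else
          margFirst η (g - 1 - (p.2 : ℕ)) (by have := p.2.isLt; omega)
            (fun t => p.1 ⟨(p.2 : ℕ) + (t : ℕ), by have := t.isLt; have := p.2.isLt; omega⟩)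
            (fun t => q.1 ⟨(p.2 : ℕ) + (t : ℕ), by have := t.isLt; have := p.2.isLt; omega⟩))
    else 0

/-- Partial trace over the last `T`-tensor factor of a state on `T^{⊗g} ⊗ ℂ^r`. -/
noncomputable def ptraceLastBlock {T : Type} [Fintype T] {g r : ℕ}
    (M : Matrix ((Fin g → T) × Fin r) ((Fin g → T) × Fin r) ℂ) :
    Matrix ((Fin (g - 1) → T) × Fin r) ((Fin (g - 1) → T) × Fin r) ℂ :=
  fun p q => ∑ t : T,
    M ((fun s : Fin g => if h : (s : ℕ) < g - 1 then p.1 ⟨s, h⟩ else t), p.2)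
      ((fun s : Fin g => if h : (s : ℕ) < g - 1 then q.1 ⟨s, h⟩ else t), q.2)

/-- Partial trace over the first `g−1` `T`-tensor factors and the classical register. -/
noncomputable def ptraceAllButLast {T : Type} [Fintype T] [DecidableEq T] {g r : ℕ}
    (M : Matrix ((Fin g → T) × Fin r) ((Fin g → T) × Fin r) ℂ) :
    Matrix T T ℂ :=
  fun a b => ∑ c : Fin r, ∑ z : Fin (g - 1) → T,
    M ((fun s : Fin g => if h : (s : ℕ) < g - 1 then z ⟨s, h⟩ else a), c)
      ((fun s : Fin g => if h : (s : ℕ) < g - 1 then z ⟨s, h⟩ else b), c)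

/-- Marginal of a multipartite state on the `i`-th tensor factor. -/
noncomputable def marginalAt {T : Type} [Fintype T] [DecidableEq T] {m : ℕ}
    (η : Matrix (Fin m → T) (Fin m → T) ℂ) (i : Fin m) : Matrix T T ℂ :=
  fun a b => ∑ x : Fin m → T, if x i = a then η x (Function.update x i b) else 0

end PaperQI

/-!
Each register block of `ν₂` is, up to the weight `1/g`, a product operator
`ζ^{⊗c} ⊗ η_{1:k} ⊗ θ^{⊗r}` laid out along `T^{⊗g}`. Tracing out the last factor either
removes a `θ` factor (`tr θ = 1`) or shortens the marginal `η_{1:k}` to `η_{1:k-1}`; this turns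
block `c` of `ν₂` into block `c` of `ω`, which is (a). Tracing out everything but the last factor
turns every unit-trace factor into `1`: the `g - m` blocks ending in `θ` leave `θ`, and the `m`
blocks whose `η`-window reaches the last factor leave the single-site marginals `η_{g-c}`, one for
each site of `η`; this is (b). For (c), `P_V` fixes every `η_i`, which is supported on `V`, and
annihilates `θ`, which is supported on `W ⊥ V`.
-/

theorem Fintype.sum_prod_mul_comp_of_injective {ι κ α R : Type*} [Fintype ι] [DecidableEq ι]
    [Fintype κ] [DecidableEq κ] [Fintype α] [CommSemiring R] {e : κ → ι}
    (he : Function.Injective e) (f : ι → α → R) (G : (κ → α) → R)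
    (hf_range : ∀ j a, f (e j) a = 1) (hf_compl : ∀ s ∉ Set.range e, ∑ a, f s a = 1) :
    ∑ z : ι → α, (∏ s, f s (z s)) * G (z ∘ e) = ∑ w, G w := by
  classical
  -- Split `z` into its part on `range e`, the only part `G` sees, and the rest, over which the
  -- product of the `f s` sums to `1`.
  let σ := Equiv.piEquivPiSubtypeProd (· ∈ Set.range e) (fun _ => α)
  let ε : κ ≃ Set.range e := Equiv.ofInjective e he
  have hprod : ∀ u v, ∏ s, f s (σ.symm (u, v) s) = ∏ s : {s // s ∉ Set.range e}, f s (v s) := by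
    intro u v
    rw [← Fintype.prod_subtype_mul_prod_subtype (· ∈ Set.range e), Finset.prod_eq_one, one_mul]
    · exact Finset.prod_congr rfl fun s _ => by simp [σ, s.2]
    · rintro ⟨s, j, rfl⟩ -
      exact hf_range j _
  have hcomp : ∀ u v, σ.symm (u, v) ∘ e = u ∘ ε := fun u v => funext fun j => by simp [σ, ε]
  rw [← σ.symm.sum_comp, Fintype.sum_prod_type]
  simp only [hprod, hcomp, ← Finset.sum_mul, ← Fintype.prod_sum,
    fun s : {s // s ∉ Set.range e} => hf_compl s s.2, Finset.prod_const_one, one_mul]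
  exact (ε.symm.arrowCongr (Equiv.refl α)).sum_comp G

theorem Fin.sum_prod_mul_comp_window {α R : Type*} [Fintype α] [CommSemiring R] {n c k : ℕ}
    (hck : c + k ≤ n) (f : Fin n → α → R) (G : (Fin k → α) → R)
    (hf_in : ∀ (s : Fin n) a, c ≤ s → (s : ℕ) < c + k → f s a = 1)
    (hf_out : ∀ s : Fin n, (s : ℕ) < c ∨ c + k ≤ s → ∑ a, f s a = 1) :
    ∑ z : Fin n → α, (∏ s, f s (z s)) * G (fun j => z ⟨c + j, by omega⟩) = ∑ w, G w := by
  refine Fintype.sum_prod_mul_comp_of_injective (e := fun j : Fin k => (⟨c + j, by omega⟩ : Fin n))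
    (fun i j h => Fin.ext (by simpa using h)) f G
    (fun j a => hf_in _ a (Nat.le_add_right c j) (by simp)) (fun s hs => hf_out s ?_)
  by_contra! h
  exact hs ⟨⟨s - c, by omega⟩, Fin.ext (show c + ((s : ℕ) - c) = s by omega)⟩

theorem Fin.sum_dite_lt_sub {M : Type*} [AddCommMonoid M] {g m : ℕ} (hmg : m ≤ g) (A : M)
    (F : Fin m → M) :
    ∑ c : Fin g, (if h : (c : ℕ) < g - m then A else F ⟨g - 1 - c, by omega⟩) =
      (g - m) • A + ∑ i, F i := by
  obtain ⟨k, rfl⟩ : ∃ k, g = k + m := ⟨g - m, by omega⟩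
  rw [Fin.sum_univ_add, ← Equiv.sum_comp Fin.revPerm F]
  congr 1
  · simp only [Fin.val_castAdd, add_tsub_cancel_right, Fin.is_lt, dite_true, Finset.sum_const,
      Finset.card_univ, Fintype.card_fin]
  · refine Finset.sum_congr rfl fun i _ => ?_
    simp only [Fin.val_natAdd, Nat.add_sub_cancel, add_lt_iff_neg_left, Fin.revPerm_apply]
    rw [dif_neg (Nat.not_lt_zero _)]
    exact congrArg F (Fin.ext (by simp only [Fin.val_rev]; omega))

theorem Fin.snoc_mk {α : Type*} {n : ℕ} (w : Fin n → α) (t : α) (i : ℕ) (hi : i < n + 1) :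
    (Fin.snoc w t : Fin (n + 1) → α) ⟨i, hi⟩ = if h : i < n then w ⟨i, h⟩ else t := rfl

theorem Fin.snoc_comp_cast_window {α : Type*} {n c : ℕ} (hc : c ≤ n) (v : Fin n → α) (t : α) :
    (fun s : Fin (n + 1 - c) => (Fin.snoc v t : Fin (n + 1) → α) ⟨c + s, by omega⟩) ∘
        Fin.cast (by omega : n - c + 1 = n + 1 - c) =
      Fin.snoc (fun u : Fin (n - c) => v ⟨c + u, by omega⟩) t := by
  funext s
  refine Fin.lastCases ?_ (fun i => ?_) s
  · simp [Fin.snoc_mk, hc]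
  · simp [Fin.snoc_mk, show c + (i : ℕ) < n by omega]

theorem Fin.castLE_comp_eq_snoc_iff {α : Type*} {j m : ℕ} (hj : j + 1 ≤ m) (x : Fin m → α)
    (w : Fin j → α) (t : α) :
    (fun u : Fin (j + 1) => x (Fin.castLE hj u)) = Fin.snoc w t ↔
      (fun u : Fin j => x (Fin.castLE (by omega) u)) = w ∧ x ⟨j, hj⟩ = t := by
  rw [← Fin.snoc_init_self (fun u : Fin (j + 1) => x (Fin.castLE hj u)), Fin.snoc_inj]
  rfl

theorem Fin.prod_snoc_snoc_of_le {α R : Type*} [CommMonoid R] {n c : ℕ} (hc : c ≤ n)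
    (f : α → α → R) (x y : Fin n → α) (a b : α) :
    ∏ s : Fin (n + 1), (if (s : ℕ) < c then
        f ((Fin.snoc x a : Fin (n + 1) → α) s) ((Fin.snoc y b : Fin (n + 1) → α) s) else 1) =
      ∏ s : Fin n, if (s : ℕ) < c then f (x s) (y s) else 1 := by
  simp [Fin.prod_univ_castSucc, hc.not_gt]

theorem IsSelfAdjoint.mul_mul_self_eq_zero {A : Type*} [Semiring A] [StarRing A] {P Q ρ : A}
    (hP : IsSelfAdjoint P) (hQ : IsSelfAdjoint Q) (hPQ : P * Q = 0) (hρ : Q * ρ * Q = ρ) :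
    P * ρ * P = 0 := by
  have hQP : Q * P = 0 := by simpa [hP.star_eq, hQ.star_eq] using congrArg star hPQ
  rw [← hρ]
  calc P * (Q * ρ * Q) * P = P * Q * ρ * (Q * P) := by simp only [mul_assoc]
    _ = 0 := by rw [hPQ, hQP, mul_zero]

theorem mul_smul_add_smul_mul {R A : Type*} [CommSemiring R] [Semiring A] [Algebra R A]
    {P x y : A} (a b : R) (hx : P * x * P = x) (hy : P * y * P = 0) :
    P * (a • x + b • y) * P = a • x := by
  simp only [mul_add, add_mul, mul_smul_comm, smul_mul_assoc, hx, hy, smul_zero, add_zero]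

namespace PaperQI

section

variable {T : Type} [Fintype T] [DecidableEq T] {m : ℕ}

omit [DecidableEq T] in
theorem ptraceLastBlock_apply {n r : ℕ}
    (M : Matrix ((Fin (n + 1) → T) × Fin r) ((Fin (n + 1) → T) × Fin r) ℂ)
    (x y : Fin n → T) (c d : Fin r) :
    ptraceLastBlock M (x, c) (y, d) = ∑ t, M (Fin.snoc x t, c) (Fin.snoc y t, d) := rfl

theorem ptraceAllButLast_apply {n r : ℕ}
    (M : Matrix ((Fin (n + 1) → T) × Fin r) ((Fin (n + 1) → T) × Fin r) ℂ) (a b : T) :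
    ptraceAllButLast M a b = ∑ c, ∑ z : Fin n → T, M (Fin.snoc z a, c) (Fin.snoc z b, c) := rfl

theorem trace_marginalAt (η : Matrix (Fin m → T) (Fin m → T) ℂ) (i : Fin m) :
    (marginalAt η i).trace = η.trace := by
  unfold marginalAt Matrix.trace Matrix.diag
  rw [Finset.sum_comm]
  refine Finset.sum_congr rfl fun x _ => ?_
  simp [Finset.sum_ite_eq, Function.update_eq_self]

theorem margFirst_self (η : Matrix (Fin m → T) (Fin m → T) ℂ) : margFirst η m le_rfl = η := by
  ext a b
  simp [margFirst]

theorem margFirst_congr_length (η : Matrix (Fin m → T) (Fin m → T) ℂ) {j k : ℕ} (h : j = k)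
    (hj : j ≤ m) (a b : Fin j → T) :
    margFirst η j hj a b =
      margFirst η k (h ▸ hj) (a ∘ Fin.cast h.symm) (b ∘ Fin.cast h.symm) := by
  subst h
  rfl

theorem sum_margFirst_snoc_last (η : Matrix (Fin m → T) (Fin m → T) ℂ) {j : ℕ}
    (hj : j + 1 ≤ m) (a b : Fin j → T) :
    ∑ t, margFirst η (j + 1) hj (Fin.snoc a t) (Fin.snoc b t) = margFirst η j (by omega) a b := by
  unfold margFirst
  rw [Finset.sum_comm]
  refine Finset.sum_congr rfl fun x _ => ?_
  simp only [Fin.castLE_comp_eq_snoc_iff, ite_and, Finset.sum_ite_irrel, Finset.sum_ite_eq,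
    Finset.mem_univ, if_true, Finset.sum_const_zero]
  refine if_congr Iff.rfl (congrArg _ (funext fun s => ?_)) rfl
  simp only [Fin.snoc_mk]
  split_ifs <;> first | rfl | omega | exact congrArg x (Fin.ext (by dsimp only; omega))

theorem sum_margFirst_snoc_init (η : Matrix (Fin m → T) (Fin m → T) ℂ) {j : ℕ}
    (hj : j + 1 ≤ m) (a b : T) :
    ∑ w, margFirst η (j + 1) hj (Fin.snoc w a) (Fin.snoc w b) = marginalAt η ⟨j, hj⟩ a b := by
  unfold margFirst marginalAt
  rw [Finset.sum_comm]
  refine Finset.sum_congr rfl fun x _ => ?_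
  simp only [Fin.castLE_comp_eq_snoc_iff, ite_and, Finset.sum_ite_eq, Finset.mem_univ, if_true]
  refine if_congr Iff.rfl (congrArg _ (funext fun s => ?_)) rfl
  simp only [Fin.snoc_mk, Function.update_apply]
  split_ifs <;> simp only [Fin.ext_iff] at * <;> first | rfl | omega

/-- Block `c` of `ν₂` on `n` tensor factors, without the weight `1/g`:
`ζ^{⊗c} ⊗ η ⊗ θ^{⊗(n-m-c)}` when the `η`-window ends before the last factor, and
`ζ^{⊗c} ⊗ η_{1:n-c}` otherwise. For `n = g - 1` it is block `c` of `ω`. -/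
def registerBlock (n c : ℕ) (ζ θ : Matrix T T ℂ) (η : Matrix (Fin m → T) (Fin m → T) ℂ) :
    Matrix (Fin n → T) (Fin n → T) ℂ := fun x y =>
  (∏ t : Fin n, if (t : ℕ) < c then ζ (x t) (y t) else 1) *
    if h : c < n - m then
      η (fun t => x ⟨c + t, by omega⟩) (fun t => y ⟨c + t, by omega⟩) *
        ∏ t : Fin n, if c + m ≤ (t : ℕ) then θ (x t) (y t) else 1
    else
      margFirst η (n - c) (by omega) (fun t => x ⟨c + t, by omega⟩)
        (fun t => y ⟨c + t, by omega⟩)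

theorem nu2g_apply (g : ℕ) (ζ θ : Matrix T T ℂ) (η : Matrix (Fin m → T) (Fin m → T) ℂ)
    (x y : Fin g → T) (c d : Fin g) :
    nu2g g ζ θ η (x, c) (y, d) =
      if c = d then (1 / g : ℂ) * registerBlock g c ζ θ η x y else 0 := by
  simp only [nu2g, registerBlock, mul_assoc]

theorem omegag_apply (g : ℕ) (ζ θ : Matrix T T ℂ) (η : Matrix (Fin m → T) (Fin m → T) ℂ)
    (x y : Fin (g - 1) → T) (c d : Fin g) :
    omegag g ζ θ η (x, c) (y, d) =
      if c = d then (1 / g : ℂ) * registerBlock (g - 1) c ζ θ η x y else 0 := by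
  simp only [omegag, registerBlock, mul_assoc, Nat.sub_right_comm g m 1]

theorem sum_registerBlock_snoc_last {n c : ℕ} (hc : c ≤ n) (ζ θ : Matrix T T ℂ)
    (η : Matrix (Fin m → T) (Fin m → T) ℂ) (hθ : θ.trace = 1) (x y : Fin n → T) :
    ∑ t, registerBlock (n + 1) c ζ θ η (Fin.snoc x t) (Fin.snoc y t) =
      registerBlock n c ζ θ η x y := by
  unfold registerBlock
  simp only [Fin.prod_snoc_snoc_of_le hc ζ, ← Finset.mul_sum]
  congr 1
  by_cases h : c < n + 1 - m
  · have hwin : ∀ t : Fin m, c + (t : ℕ) < n := fun t => by omega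
    have htr : ∑ t, θ t t = 1 := hθ
    simp only [dif_pos h, Fin.prod_univ_castSucc, Fin.snoc_castSucc, Fin.snoc_last,
      Fin.val_castSucc, Fin.val_last, Fin.snoc_mk, hwin, dite_true,
      if_pos (show c + m ≤ n by omega), ← Finset.mul_sum, htr, mul_one]
    by_cases h' : c < n - m
    · rw [dif_pos h']
    · have hθ_one : ∀ s : Fin n, ¬ c + m ≤ s := fun s => by omega
      rw [dif_neg h', margFirst_congr_length η (show n - c = m by omega), margFirst_self]
      simp only [hθ_one, if_false, Finset.prod_const_one, mul_one]
      rfl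
  · simp only [dif_neg h, dif_neg (show ¬ c < n - m by omega),
      margFirst_congr_length η (show n + 1 - c = n - c + 1 by omega),
      Fin.snoc_comp_cast_window hc]
    exact sum_margFirst_snoc_last η _ _ _

theorem sum_registerBlock_snoc_init {n c : ℕ} (hc : c ≤ n) (ζ θ : Matrix T T ℂ)
    (η : Matrix (Fin m → T) (Fin m → T) ℂ) (hζ : ζ.trace = 1) (hθ : θ.trace = 1)
    (hη : η.trace = 1) (a b : T) :
    ∑ z, registerBlock (n + 1) c ζ θ η (Fin.snoc z a) (Fin.snoc z b) =
      if h : c < n + 1 - m then θ a b else marginalAt η ⟨n - c, by omega⟩ a b := by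
  have htrζ : ∑ t, ζ t t = 1 := hζ
  have htrθ : ∑ t, θ t t = 1 := hθ
  unfold registerBlock
  simp only [Fin.prod_snoc_snoc_of_le hc ζ]
  by_cases h : c < n + 1 - m
  · have hwin : ∀ t : Fin m, c + (t : ℕ) < n := fun t => by omega
    simp only [dif_pos h, Fin.prod_univ_castSucc, Fin.snoc_castSucc, Fin.snoc_last,
      Fin.val_castSucc, Fin.val_last, Fin.snoc_mk, hwin, dite_true,
      if_pos (show c + m ≤ n by omega)]
    let f : Fin n → T → ℂ := fun s t =>
      (if (s : ℕ) < c then ζ t t else 1) * (if c + m ≤ (s : ℕ) then θ t t else 1)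
    calc _ = ∑ z : Fin n → T, (∏ s, f s (z s)) *
          (η (fun j => z ⟨c + j, hwin j⟩) (fun j => z ⟨c + j, hwin j⟩) * θ a b) :=
          Finset.sum_congr rfl fun z _ => by simp only [f, Finset.prod_mul_distrib]; ring
      _ = θ a b := by
          rw [Fin.sum_prod_mul_comp_window (by omega) f (fun w => η w w * θ a b)
            (fun s t hcs hsc => by simp [f, hcs.not_gt, hsc.not_ge])
            (fun s hs => by
              rcases hs with hs | hs
              · simpa [f, hs, show ¬ c + m ≤ (s : ℕ) by omega] using htrζ
              · simpa [f, hs, show ¬ (s : ℕ) < c by omega] using htrθ),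
            ← Finset.sum_mul, show ∑ w, η w w = 1 from hη, one_mul]
  · simp only [dif_neg h, margFirst_congr_length η (show n + 1 - c = n - c + 1 by omega),
      Fin.snoc_comp_cast_window hc]
    exact (Fin.sum_prod_mul_comp_window (by omega) (fun s t => if (s : ℕ) < c then ζ t t else 1)
      (fun w => margFirst η (n - c + 1) (by omega) (Fin.snoc w a) (Fin.snoc w b))
      (fun s t hcs _ => if_neg hcs.not_gt)
      (fun s hs => by simpa [show (s : ℕ) < c by omega] using htrζ)).trans
      (sum_margFirst_snoc_init η _ a b)

theorem ptraceLastBlock_nu2g (g : ℕ) (ζ θ : Matrix T T ℂ)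
    (η : Matrix (Fin m → T) (Fin m → T) ℂ) (hθ : θ.trace = 1) :
    ptraceLastBlock (nu2g g ζ θ η) = omegag g ζ θ η := by
  cases g with
  | zero => ext ⟨_, c⟩; exact c.elim0
  | succ n =>
    ext ⟨x, c⟩ ⟨y, d⟩
    simp only [ptraceLastBlock_apply, nu2g_apply, omegag_apply]
    split_ifs
    · rw [← Finset.mul_sum, sum_registerBlock_snoc_last (Nat.lt_succ_iff.mp c.isLt) ζ θ η hθ]
      rfl
    · simp

theorem ptraceAllButLast_nu2g {g : ℕ} (hm : 0 < m) (hmg : m ≤ g) (ζ θ : Matrix T T ℂ)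
    (η : Matrix (Fin m → T) (Fin m → T) ℂ) (hζ : ζ.trace = 1) (hθ : θ.trace = 1)
    (hη : η.trace = 1) :
    ptraceAllButLast (nu2g g ζ θ η) =
      ((m : ℂ) / g) • ((1 / (m : ℂ)) • ∑ i : Fin m, marginalAt η i) + (1 - (m : ℂ) / g) • θ := by
  obtain ⟨n, rfl⟩ : ∃ n, g = n + 1 := ⟨g - 1, by omega⟩
  ext a b
  simp only [ptraceAllButLast_apply, nu2g_apply, if_true, ← Finset.mul_sum,
    sum_registerBlock_snoc_init (Nat.lt_succ_iff.mp (Fin.is_lt _)) ζ θ η hζ hθ hη]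
  -- `erw`: the lemma's `n + 1 - 1 - c` is `n - c` only up to unfolding
  erw [Fin.sum_dite_lt_sub hmg (θ a b) (fun i => marginalAt η i a b)]
  have hm' : (m : ℂ) ≠ 0 := by exact_mod_cast hm.ne'
  simp only [Matrix.add_apply, Matrix.smul_apply, Matrix.sum_apply, smul_eq_mul, nsmul_eq_mul,
    Nat.cast_sub hmg]
  field_simp
  ring

end

/-- (a) Tracing the `g`-th `T`-factor of `ν₂` returns the catalyst `ω`;
(b) tracing the first `g−1` `T`-factors and the register yields
`(m/g)·ν'' + (1−m/g)·θ` with `ν'' = (1/m) ∑ η_i`; (c) under the stated support/orthogonality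
conditions, measuring the projector `P_V` on this state succeeds with probability `m/g`
with post-measurement state `ν''`. -/
theorem nu2g_properties {T : Type} [Fintype T] [DecidableEq T] {g m : ℕ}
    (hm : 1 ≤ m) (hmg : m ≤ g)
    (ζ θ : Matrix T T ℂ) (hζ : IsState ζ) (hθ : IsState θ)
    (η : Matrix (Fin m → T) (Fin m → T) ℂ) (hη : IsState η) :
    ptraceLastBlock (nu2g g ζ θ η) = omegag g ζ θ η ∧
    ptraceAllButLast (nu2g g ζ θ η) =
      ((m : ℂ) / g) • ((1 / (m : ℂ)) • ∑ i : Fin m, marginalAt η i) +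
        (1 - (m : ℂ) / g) • θ ∧
    (∀ (PV QW : Matrix T T ℂ),
      PV.IsHermitian → PV * PV = PV → QW.IsHermitian → QW * QW = QW → PV * QW = 0 →
      (∀ i : Fin m, PV * marginalAt η i * PV = marginalAt η i) →
      QW * θ * QW = θ →
      (PV * (((m : ℂ) / g) • ((1 / (m : ℂ)) • ∑ i : Fin m, marginalAt η i) +
          (1 - (m : ℂ) / g) • θ) * PV).trace = ((m : ℂ) / g) ∧
      PV * (((m : ℂ) / g) • ((1 / (m : ℂ)) • ∑ i : Fin m, marginalAt η i) +
          (1 - (m : ℂ) / g) • θ) * PV =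
        ((m : ℂ) / g) • ((1 / (m : ℂ)) • ∑ i : Fin m, marginalAt η i)) := by
  refine ⟨ptraceLastBlock_nu2g g ζ θ η hθ.2, ptraceAllButLast_nu2g hm hmg ζ θ η hζ.2 hθ.2 hη.2,
    fun PV QW hPV _ hQW _ hPQ hη_supp hθ_supp => ?_⟩
  have hν : PV * ((1 / (m : ℂ)) • ∑ i, marginalAt η i) * PV =
      (1 / (m : ℂ)) • ∑ i, marginalAt η i := by
    rw [mul_smul_comm, smul_mul_assoc, Finset.mul_sum, Finset.sum_mul]
    simp only [hη_supp]
  have hpost := mul_smul_add_smul_mul ((m : ℂ) / g) (1 - (m : ℂ) / g) hν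
    (hPV.isSelfAdjoint.mul_mul_self_eq_zero hQW.isSelfAdjoint hPQ hθ_supp)
  refine ⟨?_, hpost⟩
  have hm' : (m : ℂ) ≠ 0 := by exact_mod_cast (show m ≠ 0 by omega)
  simp only [hpost, Matrix.trace_smul, Matrix.trace_sum, trace_marginalAt, hη.2, Finset.sum_const,
    Finset.card_univ, Fintype.card_fin, nsmul_eq_mul, mul_one, smul_eq_mul]
  field_simp

end PaperQI
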